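/- arXiv:2001.04184 — 2 statements merged into one kernel-verified Lean document; each statement's English description precedes it below -/
import Mathlib

section
/- The rational filter r_{β,z} is a real rational function of order (4m−1, 4m): the polynomial q(X) = ∏_{i=1}^m (X − z_i)(X − conj(z_i))(X + z_i)(X + conj(z_i)) has real coefficients, is monic of degree 4m, and has no real roots, and there exists a polynomial p with real coefficients of degree at most 4m − 1 such that q(x)·r_{β,z}(x) = p(x) for every real x. -/
open Complex ComplexConjugate Polynomial

/-- The rational filter `r_{β,z}` of the SLiSe framework. -/
noncomputable def ratFilter (m : ℕ) (β z : Fin m → ℂ) (x : ℝ) : ℂ :=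
  ∑ i : Fin m,
    (β i / ((x : ℂ) - z i) + conj (β i) / ((x : ℂ) - conj (z i))
      - β i / ((x : ℂ) + z i) - conj (β i) / ((x : ℂ) + conj (z i)))

/-- The denominator polynomial `q(X) = ∏ᵢ (X − zᵢ)(X − conj zᵢ)(X + zᵢ)(X + conj zᵢ)`. -/
noncomputable def denomPoly (m : ℕ) (z : Fin m → ℂ) : Polynomial ℂ :=
  ∏ i : Fin m,
    ((X - C (z i)) * (X - C (conj (z i))) * (X + C (z i)) * (X + C (conj (z i))))

/-!
The denominator `q` is a product of the conjugation-stable quartics `(X ∓ w)(X ∓ conj w)`, so it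
is monic of degree `4m` with real coefficients, and its roots `±zᵢ, ±conj zᵢ` are non-real.
Multiplying `r_{β,z}` by `q` clears each pole `a` into the polynomial `q /ₘ (X - a)`, of degree
`< 4m`; complex conjugation permutes these four quotients together with their coefficients
`βᵢ, conj βᵢ`, so the numerator is fixed by conjugation and hence real.
-/

namespace Polynomial

theorem map_conj_eq_self_iff_im_coeff_eq_zero {p : ℂ[X]} :
    p.map (starRingEnd ℂ) = p ↔ ∀ n, (p.coeff n).im = 0 := by
  simp only [Polynomial.ext_iff, coeff_map, conj_eq_iff_im]

theorem exists_map_ofReal_of_map_conj_eq_self {p : ℂ[X]} (hp : p.map (starRingEnd ℂ) = p) :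
    ∃ q : ℝ[X], q.map (algebraMap ℝ ℂ) = p ∧ q.degree = p.degree := by
  refine exists_degree_eq_of_mem_lifts (lifts_iff_coeff_lifts p |>.2 fun n => ?_)
  exact ⟨(p.coeff n).re, conj_eq_iff_re.1 (by rw [← coeff_map, hp])⟩

variable {K : Type*} [Field K]

theorem eval_mul_div_sub_of_isRoot {q : K[X]} {a x : K} (ha : q.IsRoot a) (hx : q.eval x ≠ 0)
    (c : K) : q.eval x * (c / (x - a)) = (c • (q /ₘ (X - C a))).eval x := by
  have hxa : x - a ≠ 0 := sub_ne_zero.2 fun h => hx (h ▸ ha)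
  conv_lhs => rw [← mul_divByMonic_eq_iff_isRoot.2 ha]
  rw [eval_mul, eval_smul, eval_sub, eval_X, eval_C, smul_eq_mul]
  field_simp

theorem eval_mul_div_add_of_isRoot {q : K[X]} {a x : K} (ha : q.IsRoot (-a)) (hx : q.eval x ≠ 0)
    (c : K) : q.eval x * (c / (x + a)) = (c • (q /ₘ (X + C a))).eval x := by
  simpa only [sub_neg_eq_add, map_neg] using eval_mul_div_sub_of_isRoot ha hx c

end Polynomial

noncomputable def denomFactor (w : ℂ) : ℂ[X] :=
  (X - C w) * (X - C (conj w)) * (X + C w) * (X + C (conj w))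

theorem denomPoly_eq_prod (m : ℕ) (z : Fin m → ℂ) : denomPoly m z = ∏ i, denomFactor (z i) :=
  rfl

theorem denomFactor_monic (w : ℂ) : (denomFactor w).Monic := by
  unfold denomFactor; monicity!

theorem natDegree_denomFactor (w : ℂ) : (denomFactor w).natDegree = 4 := by
  unfold denomFactor; compute_degree!

theorem map_conj_denomFactor (w : ℂ) : (denomFactor w).map (starRingEnd ℂ) = denomFactor w := by
  simp only [denomFactor, Polynomial.map_mul, Polynomial.map_sub, Polynomial.map_add, map_X, map_C,
    conj_conj]
  ring

theorem eval_ofReal_denomFactor_ne_zero {w : ℂ} (hw : w.im ≠ 0) (x : ℝ) :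
    (denomFactor w).eval (x : ℂ) ≠ 0 := by
  simp [denomFactor, sub_eq_zero, add_eq_zero_iff_eq_neg, Complex.ext_iff, hw, hw.symm]

section

variable {m : ℕ} (z : Fin m → ℂ)

theorem denomPoly_monic : (denomPoly m z).Monic :=
  monic_prod_of_monic _ _ fun i _ => denomFactor_monic (z i)

theorem natDegree_denomPoly : (denomPoly m z).natDegree = 4 * m := by
  rw [denomPoly_eq_prod, natDegree_prod_of_monic _ _ fun i _ => denomFactor_monic (z i)]
  simp [natDegree_denomFactor, mul_comm]

theorem map_conj_denomPoly : (denomPoly m z).map (starRingEnd ℂ) = denomPoly m z := by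
  simp only [denomPoly_eq_prod, Polynomial.map_prod, map_conj_denomFactor]

theorem isRoot_denomPoly (i : Fin m) {a : ℂ}
    (ha : a = z i ∨ a = conj (z i) ∨ a = -z i ∨ a = -conj (z i)) : (denomPoly m z).IsRoot a := by
  rw [IsRoot.def, denomPoly_eq_prod, eval_prod]
  refine Finset.prod_eq_zero (Finset.mem_univ i) ?_
  rcases ha with rfl | rfl | rfl | rfl <;> simp [denomFactor]

theorem eval_ofReal_denomPoly_ne_zero (hz : ∀ i, (z i).im ≠ 0) (x : ℝ) :
    (denomPoly m z).eval (x : ℂ) ≠ 0 := by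
  rw [denomPoly_eq_prod, eval_prod]
  exact Finset.prod_ne_zero_iff.2 fun i _ => eval_ofReal_denomFactor_ne_zero (hz i) x

noncomputable def ratFilterNumer (β : Fin m → ℂ) : ℂ[X] :=
  ∑ i, (β i • (denomPoly m z /ₘ (X - C (z i)))
    + conj (β i) • (denomPoly m z /ₘ (X - C (conj (z i))))
    - β i • (denomPoly m z /ₘ (X + C (z i)))
    - conj (β i) • (denomPoly m z /ₘ (X + C (conj (z i)))))

theorem degree_ratFilterNumer_lt (β : Fin m → ℂ) : (ratFilterNumer z β).degree < (4 * m : ℕ) := by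
  have hq : ∀ a : ℂ, denomPoly m z /ₘ (X - C a) ∈ degreeLT ℂ (4 * m) := fun a => by
    rw [mem_degreeLT, ← natDegree_denomPoly z, ← degree_eq_natDegree (denomPoly_monic z).ne_zero]
    exact degree_divByMonic_lt _ _ (denomPoly_monic z).ne_zero (by simp [degree_X_sub_C])
  have hq' : ∀ a : ℂ, denomPoly m z /ₘ (X + C a) ∈ degreeLT ℂ (4 * m) := fun a => by
    simpa only [map_neg, sub_neg_eq_add] using hq (-a)
  rw [← mem_degreeLT]
  refine Submodule.sum_mem _ fun i _ => ?_
  exact sub_mem (sub_mem (add_mem (Submodule.smul_mem _ _ (hq _)) (Submodule.smul_mem _ _ (hq _)))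
    (Submodule.smul_mem _ _ (hq' _))) (Submodule.smul_mem _ _ (hq' _))

theorem map_conj_ratFilterNumer (β : Fin m → ℂ) :
    (ratFilterNumer z β).map (starRingEnd ℂ) = ratFilterNumer z β := by
  have hdiv : ∀ d : ℂ[X], d.Monic →
      (denomPoly m z /ₘ d).map (starRingEnd ℂ) = denomPoly m z /ₘ d.map (starRingEnd ℂ) :=
    fun d hd => by rw [map_divByMonic _ hd, map_conj_denomPoly]
  rw [ratFilterNumer, Polynomial.map_sum]
  refine Finset.sum_congr rfl fun i _ => ?_
  simp only [Polynomial.map_sub, Polynomial.map_add, Polynomial.map_smul,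
    hdiv _ (monic_X_sub_C _), hdiv _ (monic_X_add_C _), map_X, map_C, conj_conj]
  abel

theorem eval_denomPoly_mul_ratFilter (β : Fin m → ℂ) (hz : ∀ i, (z i).im ≠ 0) (x : ℝ) :
    (denomPoly m z).eval (x : ℂ) * ratFilter m β z x = (ratFilterNumer z β).eval (x : ℂ) := by
  rw [ratFilter, ratFilterNumer, Finset.mul_sum, eval_finsetSum]
  refine Finset.sum_congr rfl fun i _ => ?_
  have hx := eval_ofReal_denomPoly_ne_zero z hz x
  rw [mul_sub, mul_sub, mul_add, eval_sub, eval_sub, eval_add,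
    eval_mul_div_sub_of_isRoot (isRoot_denomPoly z i (.inl rfl)) hx,
    eval_mul_div_sub_of_isRoot (isRoot_denomPoly z i (.inr (.inl rfl))) hx,
    eval_mul_div_add_of_isRoot (isRoot_denomPoly z i (.inr (.inr (.inl rfl)))) hx,
    eval_mul_div_add_of_isRoot (isRoot_denomPoly z i (.inr (.inr (.inr rfl)))) hx]

end

/-- `r_{β,z}` is a real rational function of order `(4m−1, 4m)`: the polynomial
`q(X) = ∏ᵢ (X − zᵢ)(X − conj zᵢ)(X + zᵢ)(X + conj zᵢ)` has real coefficients, is monic of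
degree `4m`, has no real roots, and there is a real polynomial `p` of degree at most `4m − 1`
with `q(x)·r_{β,z}(x) = p(x)` for all real `x`. -/
theorem ratFilter_is_rational (m : ℕ) (β z : Fin m → ℂ) (hz : ∀ i, (z i).im ≠ 0) :
    (∀ n : ℕ, ((denomPoly m z).coeff n).im = 0) ∧
    (denomPoly m z).Monic ∧
    (denomPoly m z).natDegree = 4 * m ∧
    (∀ x : ℝ, (denomPoly m z).eval (x : ℂ) ≠ 0) ∧
    ∃ p : Polynomial ℝ, p.degree < (4 * m : ℕ) ∧
      ∀ x : ℝ, (denomPoly m z).eval (x : ℂ) * ratFilter m β z x = ((p.eval x : ℝ) : ℂ) := by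
  obtain ⟨p, hp_map, hp_deg⟩ := exists_map_ofReal_of_map_conj_eq_self (map_conj_ratFilterNumer z β)
  refine ⟨map_conj_eq_self_iff_im_coeff_eq_zero.1 (map_conj_denomPoly z), denomPoly_monic z,
    natDegree_denomPoly z, eval_ofReal_denomPoly_ne_zero z hz, p,
    hp_deg ▸ degree_ratFilterNumer_lt z β, fun x => ?_⟩
  rw [eval_denomPoly_mul_ratFilter z β hz, ← hp_map, eval_map]
  exact eval₂_at_apply _ x
end

section
/- Minimizers of the worst-case convergence rate transfer under scaling: let G ∈ (0,1) and m ∈ ℕ, and let A = { (β', z') ∈ ℂ^m × ℂ^m : Im(z'_i) ≠ 0 for all i } be the admissible parameter set. If (β, z) ∈ A satisfies w_{√G}(r_{β,z}) ≤ w_{√G}(r_{β',z'}) for all (β', z') ∈ A, then the scaled parameters (√(G⁻¹)β, √(G⁻¹)z) ∈ A satisfy W_G(r_{√(G⁻¹)β, √(G⁻¹)z}) ≤ W_G(r_{β',z'}) for all (β', z') ∈ A. -/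
open Complex ComplexConjugate

/-- `S(G,f)`: supremum of `|f|` over the exterior region `{x : |x| ≥ G⁻¹}`. -/
noncomputable def supExterior (G : ℝ) (f : ℝ → ℂ) : ℝ :=
  sSup {y : ℝ | ∃ x : ℝ, G⁻¹ ≤ |x| ∧ y = ‖f x‖}

/-- The worst-case convergence rate `w_G(f) = S/I` with `I` the infimum of `|f|` on `[−G,G]`. -/
noncomputable def wcr (G : ℝ) (f : ℝ → ℂ) : ℝ :=
  supExterior G f / sInf {y : ℝ | ∃ x ∈ Set.Icc (-G) G, y = ‖f x‖}

/-- The modified worst-case objective `W_G(f) = S/J` with `J` the infimum of `|f|` on `[−1,1]`. -/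
noncomputable def wcrMod (G : ℝ) (f : ℝ → ℂ) : ℝ :=
  supExterior G f / sInf {y : ℝ | ∃ x ∈ Set.Icc (-1 : ℝ) 1, y = ‖f x‖}

/-! Since `r_{cβ,cz}(cx) = r_{β,z}(x)` and `x ↦ √G x` maps `[-1,1]` onto `[-√G,√G]` and
`{|x| ≥ G⁻¹}` onto `{|x| ≥ (√G)⁻¹}`, we get `W_G(r_{β/√G, z/√G}) = w_{√G}(r_{β,z})`. The scaling
`(β, z) ↦ (√G β, √G z)` preserves admissibility, so minimizers of `w_{√G}` correspond to
minimizers of `W_G`. -/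

lemma ratFilter_mul_mul (m : ℕ) (β z : Fin m → ℂ) {c : ℝ} (hc : c ≠ 0) (x : ℝ) :
    ratFilter m (fun i => (c : ℂ) * β i) (fun i => (c : ℂ) * z i) (c * x) = ratFilter m β z x := by
  have hc' : (c : ℂ) ≠ 0 := ofReal_ne_zero.2 hc
  refine Finset.sum_congr rfl fun i _ => ?_
  simp only [ofReal_mul, map_mul, conj_ofReal, ← mul_sub, ← mul_add, mul_div_mul_left _ _ hc']

lemma setOf_exists_eq_comp_mul {P : ℝ → Prop} {g : ℝ → ℝ} {c : ℝ} (hc : c ≠ 0) :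
    {y | ∃ x, P x ∧ y = g (c * x)} = {y | ∃ x, P (x / c) ∧ y = g x} := by
  ext y
  constructor
  · rintro ⟨x, hx, rfl⟩
    exact ⟨c * x, by rwa [mul_div_cancel_left₀ _ hc], rfl⟩
  · rintro ⟨x, hx, rfl⟩
    exact ⟨x / c, hx, by rw [mul_div_cancel₀ _ hc]⟩

lemma supExterior_comp_mul (G : ℝ) {c : ℝ} (hc : 0 < c) (f : ℝ → ℂ) :
    supExterior G (fun x => f (c * x)) = supExterior (G / c) f := by
  unfold supExterior
  rw [setOf_exists_eq_comp_mul (g := fun x => ‖f x‖) hc.ne']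
  simp_rw [abs_div, abs_of_pos hc, le_div_iff₀ hc, inv_div, div_eq_inv_mul]

lemma setOf_norm_Icc_comp_mul {c : ℝ} (hc : 0 < c) (f : ℝ → ℂ) :
    {y : ℝ | ∃ x ∈ Set.Icc (-1 : ℝ) 1, y = ‖f (c * x)‖} =
      {y : ℝ | ∃ x ∈ Set.Icc (-c) c, y = ‖f x‖} := by
  rw [setOf_exists_eq_comp_mul (g := fun x => ‖f x‖) hc.ne']
  simp_rw [Set.mem_Icc, le_div_iff₀ hc, div_le_one hc, neg_one_mul]

lemma wcrMod_sq_comp_mul {c : ℝ} (hc : 0 < c) (f : ℝ → ℂ) :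
    wcrMod (c ^ 2) (fun x => f (c * x)) = wcr c f := by
  rw [wcrMod, wcr, supExterior_comp_mul _ hc, setOf_norm_Icc_comp_mul hc, sq,
    mul_div_cancel_right₀ _ hc.ne']

lemma im_ofReal_mul_ne_zero {c : ℝ} (hc : c ≠ 0) {w : ℂ} (hw : w.im ≠ 0) :
    ((c : ℂ) * w).im ≠ 0 := by
  rw [im_ofReal_mul]
  exact mul_ne_zero hc hw

/-- Minimizers of the worst-case convergence rate transfer under scaling: if `(β, z)` is an
admissible minimizer of `w_{√G}` over the admissible set `A`, then the scaled parameters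
`(√(G⁻¹)β, √(G⁻¹)z)` are admissible and minimize `W_G` over `A`. -/
theorem wcrMod_minimizer_of_wcr_minimizer (G : ℝ) (hG : G ∈ Set.Ioo (0 : ℝ) 1) (m : ℕ)
    (A : Set ((Fin m → ℂ) × (Fin m → ℂ)))
    (hA : A = {p : (Fin m → ℂ) × (Fin m → ℂ) | ∀ i, (p.2 i).im ≠ 0})
    (β z : Fin m → ℂ) (hmem : (β, z) ∈ A)
    (hmin : ∀ p ∈ A, wcr (Real.sqrt G) (ratFilter m β z) ≤ wcr (Real.sqrt G) (ratFilter m p.1 p.2)) :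
    ((fun i => (Real.sqrt (G⁻¹) : ℂ) * β i), (fun i => (Real.sqrt (G⁻¹) : ℂ) * z i)) ∈ A ∧
    ∀ p ∈ A,
      wcrMod G (ratFilter m (fun i => (Real.sqrt (G⁻¹) : ℂ) * β i)
          (fun i => (Real.sqrt (G⁻¹) : ℂ) * z i)) ≤
        wcrMod G (ratFilter m p.1 p.2) := by
  subst hA
  obtain ⟨s, hs, rfl⟩ : ∃ s, 0 < s ∧ G = s ^ 2 :=
    ⟨√G, Real.sqrt_pos.2 hG.1, (Real.sq_sqrt hG.1.le).symm⟩
  rw [Real.sqrt_sq hs.le] at hmin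
  rw [← inv_pow, Real.sqrt_sq (inv_pos.2 hs).le]
  refine ⟨fun i => im_ofReal_mul_ne_zero (inv_ne_zero hs.ne') (hmem i), fun p hp => ?_⟩
  have hscaled : ratFilter m (fun i => ((s⁻¹ : ℝ) : ℂ) * β i) (fun i => ((s⁻¹ : ℝ) : ℂ) * z i) =
      fun x => ratFilter m β z (s * x) := funext fun x => by
    simpa [hs.ne'] using ratFilter_mul_mul m β z (inv_ne_zero hs.ne') (s * x)
  calc _ = wcr s (ratFilter m β z) := by rw [hscaled, wcrMod_sq_comp_mul hs]
    _ ≤ wcr s (ratFilter m (fun i => (s : ℂ) * p.1 i) (fun i => (s : ℂ) * p.2 i)) :=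
      hmin (fun i => (s : ℂ) * p.1 i, fun i => (s : ℂ) * p.2 i)
        fun i => im_ofReal_mul_ne_zero hs.ne' (hp i)
    _ = wcrMod (s ^ 2) (ratFilter m p.1 p.2) := by
      rw [← wcrMod_sq_comp_mul hs]
      exact congrArg _ (funext (ratFilter_mul_mul m p.1 p.2 hs.ne'))
end
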